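/- arXiv:2405.12678 — 12 statements merged into one kernel-verified Lean document; each statement's English description precedes it below -/
import Mathlib

section
/- Let q be a prime power (q = p^j for a prime p and j ≥ 1) and let n = q^(2^k) for some natural number k ≥ 1. Then there exists a finite family F of q-element subsets of Fin n such that every pair of distinct elements of Fin n is contained in exactly one member of F, and moreover F.card * Nat.choose q 2 = Nat.choose n 2 (so F has exactly (n choose 2)/(q choose 2) members). -/
/-!
The blocks are the affine lines of `𝔽_q ^ (2 ^ k)`: two distinct points lie on exactly one
line, and each line has `q` points. Counting the `2`-subsets of points block by block then
gives the number of blocks.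
-/

open Finset

/-- The blocks `F` of a Steiner system `S(2, q, |α|)`. -/
structure IsSteinerSystem {α : Type*} (F : Finset (Finset α)) (q : ℕ) : Prop where
  card_eq : ∀ S ∈ F, S.card = q
  existsUnique : ∀ a b : α, a ≠ b → ∃! S, S ∈ F ∧ a ∈ S ∧ b ∈ S

namespace IsSteinerSystem

variable {α β : Type*} {F : Finset (Finset α)} {q : ℕ}

theorem map (h : IsSteinerSystem F q) (e : α ≃ β) :
    IsSteinerSystem (F.map e.finsetCongr.toEmbedding) q where
  card_eq T hT := by
    obtain ⟨S, hS, rfl⟩ := mem_map.mp hT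
    simpa using h.card_eq S hS
  existsUnique a b hab := by
    refine (e.finsetCongr.existsUnique_congr fun S => ?_).mp
      (h.existsUnique (e.symm a) (e.symm b) (e.symm.injective.ne hab))
    simp [mem_map_equiv, Equiv.finsetCongr_symm, map_map]

theorem card_mul_choose_two [Fintype α] [DecidableEq α] (h : IsSteinerSystem F q) :
    F.card * q.choose 2 = (Fintype.card α).choose 2 := by
  have hpairs : (univ : Finset α).powersetCard 2 = F.biUnion (powersetCard 2) := by
    ext t
    simp only [mem_powersetCard, subset_univ, true_and, mem_biUnion]
    constructor
    · intro ht
      obtain ⟨a, b, hab, rfl⟩ := card_eq_two.mp ht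
      obtain ⟨S, ⟨hS, haS, hbS⟩, -⟩ := h.existsUnique a b hab
      exact ⟨S, hS, insert_subset haS (singleton_subset_iff.mpr hbS), ht⟩
    · rintro ⟨-, -, -, ht⟩
      exact ht
  have hdisj : (F : Set (Finset α)).PairwiseDisjoint (powersetCard 2) := by
    intro S hS T hT hST
    refine disjoint_left.mpr fun t htS htT => hST ?_
    rw [mem_powersetCard] at htS htT
    obtain ⟨a, b, hab, rfl⟩ := card_eq_two.mp htS.2
    obtain ⟨U, -, huniq⟩ := h.existsUnique a b hab
    have hmem : ∀ W : Finset α, {a, b} ⊆ W → a ∈ W ∧ b ∈ W := fun W hW =>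
      ⟨hW (mem_insert_self a {b}), hW (mem_insert_of_mem (mem_singleton_self b))⟩
    exact (huniq S ⟨hS, hmem S htS.1⟩).trans (huniq T ⟨hT, hmem T htT.1⟩).symm
  rw [← card_univ, ← card_powersetCard, hpairs, card_biUnion hdisj,
    sum_congr rfl fun S hS => by rw [card_powersetCard, h.card_eq S hS], sum_const, smul_eq_mul]

end IsSteinerSystem

section AffineLines

variable (K : Type*) {V : Type*} [Field K] [Fintype K] [AddCommGroup V] [Module K V]
  [DecidableEq V]

def affineLine (a d : V) : Finset V :=
  univ.image fun t : K => a + t • d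

variable {K}

theorem mem_affineLine {a d x : V} : x ∈ affineLine K a d ↔ ∃ t : K, a + t • d = x := by
  simp [affineLine]

theorem card_affineLine (a : V) {d : V} (hd : d ≠ 0) : (affineLine K a d).card = Fintype.card K :=
  card_image_of_injective _ ((add_right_injective a).comp (smul_left_injective K hd))

theorem affineLine_eq_of_mem {c d a b : V} (ha : a ∈ affineLine K c d)
    (hb : b ∈ affineLine K c d) (hab : a ≠ b) : affineLine K c d = affineLine K a (b - a) := by
  obtain ⟨t₁, rfl⟩ := mem_affineLine.mp ha
  obtain ⟨t₂, rfl⟩ := mem_affineLine.mp hb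
  have ht : t₂ - t₁ ≠ 0 := sub_ne_zero.mpr fun h => hab (by rw [h])
  have hdir : c + t₂ • d - (c + t₁ • d) = (t₂ - t₁) • d := by rw [sub_smul]; abel
  ext x
  simp only [mem_affineLine, hdir, smul_smul]
  constructor
  · rintro ⟨s, rfl⟩
    refine ⟨(s - t₁) / (t₂ - t₁), ?_⟩
    rw [div_mul_cancel₀ _ ht, sub_smul]
    abel
  · rintro ⟨u, rfl⟩
    exact ⟨t₁ + u * (t₂ - t₁), by rw [add_smul]; abel⟩

variable (K V) [Fintype V]

def affineLines : Finset (Finset V) :=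
  univ.offDiag.image fun p : V × V => affineLine K p.1 (p.2 - p.1)

theorem isSteinerSystem_affineLines :
    IsSteinerSystem (affineLines K V) (Fintype.card K) where
  card_eq S hS := by
    obtain ⟨⟨a, b⟩, hab, rfl⟩ := mem_image.mp hS
    exact card_affineLine a (sub_ne_zero.mpr (mem_offDiag.mp hab).2.2.symm)
  existsUnique a b hab := by
    refine ⟨affineLine K a (b - a), ⟨?_, ?_, ?_⟩, ?_⟩
    · exact mem_image.mpr ⟨(a, b), by simpa using hab, rfl⟩
    · exact mem_affineLine.mpr ⟨0, by simp⟩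
    · exact mem_affineLine.mpr ⟨1, by simp⟩
    · rintro S ⟨hS, haS, hbS⟩
      obtain ⟨⟨c, e⟩, -, rfl⟩ := mem_image.mp hS
      exact affineLine_eq_of_mem haS hbS hab

end AffineLines

theorem exists_isSteinerSystem_fin_prime_pow (p j m : ℕ) [Fact p.Prime] (hj : j ≠ 0) :
    ∃ F : Finset (Finset (Fin ((p ^ j) ^ m))), IsSteinerSystem F (p ^ j) := by
  classical
  let K := GaloisField p j
  let _ : Fintype K := Fintype.ofFinite K
  have hK : Fintype.card K = p ^ j := by
    rw [← Nat.card_eq_fintype_card, GaloisField.card p j hj]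
  have hV : Fintype.card (Fin m → K) = (p ^ j) ^ m := by simp [hK]
  exact ⟨_, hK ▸ (isSteinerSystem_affineLines K (Fin m → K)).map
    (Fintype.equivFinOfCardEq hV)⟩

theorem minimal_sorting_prime_power_tower_general
    (p j q k n : ℕ) (hp : p.Prime) (hj : 1 ≤ j) (hq : q = p ^ j)
    (hn : n = q ^ (2 ^ k)) :
    ∃ F : Finset (Finset (Fin n)),
      (∀ S ∈ F, S.card = q) ∧
      (∀ a b : Fin n, a ≠ b → ∃! S, S ∈ F ∧ a ∈ S ∧ b ∈ S) ∧
      F.card * Nat.choose q 2 = Nat.choose n 2 := by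
  have : Fact p.Prime := ⟨hp⟩
  subst hq hn
  obtain ⟨F, hF⟩ := exists_isSteinerSystem_fin_prime_pow p j (2 ^ k) (by omega)
  exact ⟨F, hF.card_eq, hF.existsUnique, by simpa using hF.card_mul_choose_two⟩

/-- Minimal one-round sorting (Steiner system `S(2, q, q^(2^k))`) exists when `q`
is a prime power and `n = q^(2^k)` for `k ≥ 1`. -/
theorem minimal_sorting_prime_power_tower
    (p j q k n : ℕ) (hp : p.Prime) (hj : 1 ≤ j) (hq : q = p ^ j)
    (hk : 1 ≤ k) (hn : n = q ^ (2 ^ k)) :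
    ∃ F : Finset (Finset (Fin n)),
      (∀ S ∈ F, S.card = q) ∧
      (∀ a b : Fin n, a ≠ b → ∃! S, S ∈ F ∧ a ∈ S ∧ b ∈ S) ∧
      F.card * Nat.choose q 2 = Nat.choose n 2 :=
  minimal_sorting_prime_power_tower_general p j q k n hp hj hq hn
end

section
/- Let n, t be natural numbers and let F be a finite family (a Finset of Finsets) of subsets of Fin n such that every member of F has cardinality exactly t, every pair of distinct elements of Fin n is contained in at least one member of F, and F.card * Nat.choose t 2 = Nat.choose n 2. Then every pair of distinct elements of Fin n is contained in exactly one member of F. -/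
/-!
Double count the incidences between `k`-subsets and members of `F` containing them: each
`t`-set contains `t.choose k` of them, so there are `#F * t.choose k` incidences in total.
Every `k`-subset lies in at least one member, and the total equals the number of `k`-subsets,
so none lies in two.
-/

open Finset

namespace Finset

variable {α : Type*} [Fintype α] [DecidableEq α]

lemma filter_subset_powersetCard_univ (k : ℕ) (S : Finset α) :
    {p ∈ (univ : Finset α).powersetCard k | p ⊆ S} = S.powersetCard k := by
  ext p
  simp only [mem_filter, mem_powersetCard, subset_univ, true_and, and_comm]

theorem sum_card_filter_superset_eq_sum_choose (k : ℕ) (F : Finset (Finset α)) :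
    ∑ p ∈ (univ : Finset α).powersetCard k, #{S ∈ F | p ⊆ S} = ∑ S ∈ F, (#S).choose k := by
  refine (sum_card_bipartiteAbove_eq_sum_card_bipartiteBelow (fun p S : Finset α ↦ p ⊆ S)
    (s := univ.powersetCard k) (t := F)).trans (sum_congr rfl fun S _ ↦ ?_)
  rw [bipartiteBelow, filter_subset_powersetCard_univ, card_powersetCard]

theorem card_filter_superset_eq_one_of_card_mul_choose_eq {k t : ℕ} {F : Finset (Finset α)}
    (hcard : ∀ S ∈ F, #S = t) (hcov : ∀ p : Finset α, #p = k → ∃ S ∈ F, p ⊆ S)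
    (hmin : #F * t.choose k = (Fintype.card α).choose k) {p : Finset α} (hp : #p = k) :
    #{S ∈ F | p ⊆ S} = 1 := by
  set P := (univ : Finset α).powersetCard k
  have hpos : ∀ q ∈ P, 1 ≤ #{S ∈ F | q ⊆ S} := fun q hq ↦ by
    obtain ⟨S, hS, hqS⟩ := hcov q (mem_powersetCard.1 hq).2
    exact card_pos.2 ⟨S, mem_filter.2 ⟨hS, hqS⟩⟩
  have htotal : ∑ q ∈ P, 1 = ∑ q ∈ P, #{S ∈ F | q ⊆ S} := calc
    ∑ q ∈ P, 1 = (Fintype.card α).choose k := by simp [P, card_powersetCard]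
    _ = ∑ S ∈ F, t.choose k := by simp [hmin]
    _ = ∑ q ∈ P, #{S ∈ F | q ⊆ S} := by
      rw [sum_card_filter_superset_eq_sum_choose]
      exact sum_congr rfl fun S hS ↦ by rw [hcard S hS]
  exact ((sum_eq_sum_iff_of_le hpos).1 htotal p (by simp [P, hp])).symm

end Finset

/-- A covering family of `t`-sets attaining the minimal comparator count
`(n choose 2) / (t choose 2)` covers every pair exactly once, i.e., it is a
Steiner system `S(2,t,n)`. -/
theorem minimal_covering_is_steiner
    (n t : ℕ) (F : Finset (Finset (Fin n)))
    (hcard : ∀ S ∈ F, S.card = t)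
    (hcov : ∀ a b : Fin n, a ≠ b → ∃ S ∈ F, a ∈ S ∧ b ∈ S)
    (hmin : F.card * Nat.choose t 2 = Nat.choose n 2) :
    ∀ a b : Fin n, a ≠ b → ∃! S, S ∈ F ∧ a ∈ S ∧ b ∈ S := by
  have hcov₂ : ∀ p : Finset (Fin n), #p = 2 → ∃ S ∈ F, p ⊆ S := fun p hp ↦ by
    obtain ⟨a, b, hab, rfl⟩ := card_eq_two.1 hp
    obtain ⟨S, hS, haS, hbS⟩ := hcov a b hab
    exact ⟨S, hS, insert_subset haS (singleton_subset_iff.2 hbS)⟩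
  intro a b hab
  have hunique := card_filter_superset_eq_one_of_card_mul_choose_eq hcard hcov₂
    (by rwa [Fintype.card_fin]) (card_pair hab)
  simpa [insert_subset_iff, and_assoc] using card_eq_one_iff_existsUnique.1 hunique
end

section
/- Let t, m, n be natural numbers with 2 ≤ t. Suppose there exists a finite family F' of t-element subsets of Fin m such that every pair of distinct elements of Fin m is contained in exactly one member of F', and there exists a finite family G of m-element subsets of Fin n such that every pair of distinct elements of Fin n is contained in exactly one member of G. Then there exists a finite family H of t-element subsets of Fin n such that every pair of distinct elements of Fin n is contained in exactly one member of H. -/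
/-!
Lay a copy of the `S(2,t,m)` on every block `B` of the `S(2,m,n)` through a bijection
`Fin m ≃ B`, and take the union of the copies. Distinct points `a, b` lie in a unique block `B`;
since each copy lives inside its own block, a member of the union containing `a` and `b`
comes from the copy on `B`, where it is unique.
-/

open Finset

variable {α β : Type*}

def CoversPairsUniquely (X : Set α) (F : Finset (Finset α)) : Prop :=
  ∀ a ∈ X, ∀ b ∈ X, a ≠ b → ∃! S, S ∈ F ∧ a ∈ S ∧ b ∈ S

namespace CoversPairsUniquely

variable [DecidableEq β]

theorem map (e : α ↪ β) {X : Set α} {F : Finset (Finset α)} (hF : CoversPairsUniquely X F) :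
    CoversPairsUniquely (e '' X) (F.image (Finset.map e)) := by
  rintro _ ⟨a, ha, rfl⟩ _ ⟨b, hb, rfl⟩ hab
  obtain ⟨S, ⟨hSF, haS, hbS⟩, hS_unique⟩ := hF a ha b hb (ne_of_apply_ne e hab)
  refine ⟨S.map e, ⟨mem_image_of_mem _ hSF, mem_map_of_mem e haS, mem_map_of_mem e hbS⟩, ?_⟩
  rintro _ ⟨hS', haS', hbS'⟩
  obtain ⟨S', hS'F, rfl⟩ := mem_image.1 hS'
  rw [hS_unique S' ⟨hS'F, (mem_map' e).1 haS', (mem_map' e).1 hbS'⟩]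

theorem biUnion {X : Set β} {G : Finset (Finset β)} {K : Finset β → Finset (Finset β)}
    (hG : CoversPairsUniquely X G) (hK_subset : ∀ B ∈ G, ∀ S ∈ K B, S ⊆ B)
    (hK : ∀ B ∈ G, CoversPairsUniquely ↑B (K B)) :
    CoversPairsUniquely X (G.biUnion K) := by
  intro a ha b hb hab
  obtain ⟨B, ⟨hBG, haB, hbB⟩, hB_unique⟩ := hG a ha b hb hab
  obtain ⟨S, ⟨hSK, haS, hbS⟩, hS_unique⟩ := hK B hBG a haB b hbB hab
  refine ⟨S, ⟨mem_biUnion.2 ⟨B, hBG, hSK⟩, haS, hbS⟩, ?_⟩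
  rintro S' ⟨hS', haS', hbS'⟩
  obtain ⟨B', hB'G, hS'K⟩ := mem_biUnion.1 hS'
  have hS'B' := hK_subset B' hB'G S' hS'K
  obtain rfl : B' = B := hB_unique B' ⟨hB'G, hS'B' haS', hS'B' hbS'⟩
  exact hS_unique S' ⟨hS'K, haS', hbS'⟩

theorem exists_on_finset [Fintype α] {t : ℕ} {F : Finset (Finset α)}
    (hF_card : ∀ S ∈ F, S.card = t) (hF : CoversPairsUniquely Set.univ F)
    {B : Finset β} (hB : B.card = Fintype.card α) :
    ∃ K : Finset (Finset β), (∀ S ∈ K, S.card = t ∧ S ⊆ B) ∧ CoversPairsUniquely ↑B K := by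
  let e : α ↪ β :=
    (Fintype.equivOfCardEq (by simp [hB]) : α ≃ B).toEmbedding.trans (Function.Embedding.subtype _)
  have he : Set.range e = B := by
    rw [Function.Embedding.coe_trans, Set.range_comp, Equiv.coe_toEmbedding, Equiv.range_eq_univ,
      Set.image_univ, Function.Embedding.coe_subtype, Subtype.range_coe]
  refine ⟨F.image (Finset.map e), ?_, by simpa [he] using hF.map e⟩
  simp only [mem_image]
  rintro _ ⟨S, hSF, rfl⟩
  refine ⟨by rw [card_map, hF_card S hSF], fun x hx => ?_⟩
  obtain ⟨y, -, rfl⟩ := mem_map.1 hx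
  exact mem_coe.1 (he ▸ Set.mem_range_self y)

end CoversPairsUniquely

theorem steiner_composition_general
    (t m n : ℕ)
    (hF : ∃ F' : Finset (Finset (Fin m)),
      (∀ S ∈ F', S.card = t) ∧
      (∀ a b : Fin m, a ≠ b → ∃! S, S ∈ F' ∧ a ∈ S ∧ b ∈ S))
    (hG : ∃ G : Finset (Finset (Fin n)),
      (∀ S ∈ G, S.card = m) ∧
      (∀ a b : Fin n, a ≠ b → ∃! S, S ∈ G ∧ a ∈ S ∧ b ∈ S)) :
    ∃ H : Finset (Finset (Fin n)),
      (∀ S ∈ H, S.card = t) ∧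
      (∀ a b : Fin n, a ≠ b → ∃! S, S ∈ H ∧ a ∈ S ∧ b ∈ S) := by
  obtain ⟨F, hF_card, hF⟩ := hF
  obtain ⟨G, hG_card, hG⟩ := hG
  have hK : ∀ B ∈ G, ∃ K : Finset (Finset (Fin n)),
      (∀ S ∈ K, S.card = t ∧ S ⊆ B) ∧ CoversPairsUniquely ↑B K := fun B hB =>
    CoversPairsUniquely.exists_on_finset hF_card (fun a _ b _ => hF a b)
      (by rw [hG_card B hB, Fintype.card_fin])
  choose! K hK_card hK using hK
  refine ⟨G.biUnion K, fun S hS => ?_, fun a b hab => ?_⟩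
  · obtain ⟨B, hB, hSK⟩ := mem_biUnion.1 hS
    exact (hK_card B hB S hSK).1
  · exact CoversPairsUniquely.biUnion (fun a _ b _ => hG a b)
      (fun B hB S hS => (hK_card B hB S hS).2) hK a (Set.mem_univ a) b (Set.mem_univ b) hab

/-- Composition of Steiner systems: an `S(2,m,n)` whose blocks are each refined
by a copy of an `S(2,t,m)` yields an `S(2,t,n)`. -/
theorem steiner_composition
    (t m n : ℕ) (ht : 2 ≤ t)
    (hF : ∃ F' : Finset (Finset (Fin m)),
      (∀ S ∈ F', S.card = t) ∧
      (∀ a b : Fin m, a ≠ b → ∃! S, S ∈ F' ∧ a ∈ S ∧ b ∈ S))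
    (hG : ∃ G : Finset (Finset (Fin n)),
      (∀ S ∈ G, S.card = m) ∧
      (∀ a b : Fin n, a ≠ b → ∃! S, S ∈ G ∧ a ∈ S ∧ b ∈ S)) :
    ∃ H : Finset (Finset (Fin n)),
      (∀ S ∈ H, S.card = t) ∧
      (∀ a b : Fin n, a ≠ b → ∃! S, S ∈ H ∧ a ∈ S ∧ b ∈ S) :=
  steiner_composition_general t m n hF hG
end

section
/- Let n, t be natural numbers and let F be a finite family (a Finset of Finsets) of subsets of Fin n such that every member of F has cardinality at most t and every pair of distinct elements of Fin n is contained in at least one member of F. Then F.card * Nat.choose t 2 ≥ Nat.choose n 2. -/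
open Finset

section PairCovering

variable {α : Type*} [DecidableEq α]

theorem powersetCard_two_subset_biUnion {s : Finset α} {F : Finset (Finset α)}
    (hcov : ∀ a ∈ s, ∀ b ∈ s, a ≠ b → ∃ S ∈ F, a ∈ S ∧ b ∈ S) :
    s.powersetCard 2 ⊆ F.biUnion (powersetCard 2) := by
  intro P hP
  obtain ⟨hPs, hP2⟩ := mem_powersetCard.mp hP
  obtain ⟨a, b, hab, rfl⟩ := card_eq_two.mp hP2
  obtain ⟨has, hbs⟩ := insert_subset_iff.mp hPs
  obtain ⟨S, hS, haS, hbS⟩ := hcov a has b (singleton_subset_iff.mp hbs) hab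
  exact mem_biUnion.mpr ⟨S, hS, mem_powersetCard.mpr
    ⟨insert_subset haS (singleton_subset_iff.mpr hbS), hP2⟩⟩

theorem choose_card_two_le_sum_of_covers_pairs {s : Finset α} {F : Finset (Finset α)}
    (hcov : ∀ a ∈ s, ∀ b ∈ s, a ≠ b → ∃ S ∈ F, a ∈ S ∧ b ∈ S) :
    s.card.choose 2 ≤ ∑ S ∈ F, S.card.choose 2 :=
  calc s.card.choose 2 = (s.powersetCard 2).card := (card_powersetCard 2 s).symm
    _ ≤ (F.biUnion (powersetCard 2)).card := card_le_card (powersetCard_two_subset_biUnion hcov)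
    _ ≤ ∑ S ∈ F, (S.powersetCard 2).card := card_biUnion_le
    _ = ∑ S ∈ F, S.card.choose 2 := by simp only [card_powersetCard]

end PairCovering

/-- Lower bound for one-round sorting: any family of sets of cardinality at
most `t` covering all pairs of `Fin n` has at least
`(n choose 2) / (t choose 2)` members. -/
theorem covering_family_lower_bound
    (n t : ℕ) (F : Finset (Finset (Fin n)))
    (hcard : ∀ S ∈ F, S.card ≤ t)
    (hcov : ∀ a b : Fin n, a ≠ b → ∃ S ∈ F, a ∈ S ∧ b ∈ S) :
    F.card * Nat.choose t 2 ≥ Nat.choose n 2 :=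
  calc Nat.choose n 2 = (univ : Finset (Fin n)).card.choose 2 := by rw [card_univ, Fintype.card_fin]
    _ ≤ ∑ S ∈ F, S.card.choose 2 :=
        choose_card_two_le_sum_of_covers_pairs fun a _ b _ hab ↦ hcov a b hab
    _ ≤ ∑ _S ∈ F, t.choose 2 := sum_le_sum fun S hS ↦ Nat.choose_le_choose 2 (hcard S hS)
    _ = F.card * t.choose 2 := by rw [sum_const, smul_eq_mul]
end

section
/- Let n be a natural number and let F be a finite family of finite subsets of Fin n. Then the following are equivalent: (i) for all bijections f, g : Fin n → Fin n, if for every S ∈ F and all i, j ∈ S one has (f i ≤ f j ↔ g i ≤ g j), then f = g; (ii) for every pair of distinct elements i, j of Fin n there exists S ∈ F with i ∈ S and j ∈ S. -/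
/-!
If every pair is compared, the two rankings induce the same linear order, so one is an order
automorphism of the other, and a finite linear order has only the trivial one. Conversely, if
`i ≠ j` are never compared, take a ranking placing `i` and `j` in consecutive positions `a ⋖ b`
and exchange those two positions: no comparator sees the difference.
-/

namespace Equiv

variable {α β : Type*}

theorem exists_apply_eq_and_apply_eq [DecidableEq β] (e : α ≃ β) {i j : α} {a b : β}
    (hij : i ≠ j) (hab : a ≠ b) : ∃ f : α ≃ β, f i = a ∧ f j = b := by
  set f₁ := e.trans (swap (e i) a)
  have hf₁ : f₁ i = a := by simp [f₁]
  have ha : a ≠ f₁ j := hf₁ ▸ f₁.injective.ne hij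
  refine ⟨f₁.trans (swap (f₁ j) b), ?_, by simp⟩
  rw [trans_apply, hf₁, swap_apply_of_ne_of_ne ha hab]

theorem swap_apply_le_swap_apply_iff_of_covBy [LinearOrder β] {a b x y : β} (hab : a ⋖ b)
    (hxy : ¬(x = a ∧ y = b)) (hyx : ¬(x = b ∧ y = a)) :
    swap a b x ≤ swap a b y ↔ x ≤ y := by
  have hx := hab.lt_iff_le_left (z := x)
  have hy := hab.lt_iff_le_left (z := y)
  have hx' := hab.le_iff_lt_right (z := x)
  have hy' := hab.le_iff_lt_right (z := y)
  grind

theorem eq_of_le_iff_le [LinearOrder β] [WellFoundedLT β] {f g : α ≃ β}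
    (h : ∀ x y, f x ≤ f y ↔ g x ≤ g y) : f = g := by
  let e : β ≃o β :=
    ⟨f.symm.trans g, fun {x y} => by simpa using (h (f.symm x) (f.symm y)).symm⟩
  ext x
  simpa [e] using congrArg (· (f x)) (Subsingleton.elim (OrderIso.refl β) e)

end Equiv

/-- A one-round comparison scheme `F` sorts `n` elements (exactly one ranking
is consistent with all comparator outputs) if and only if every pair of
distinct elements is compared by some comparator. -/
theorem sorts_iff_covers_pairs
    (n : ℕ) (F : Finset (Finset (Fin n))) :
    (∀ f g : Fin n ≃ Fin n,
        (∀ S ∈ F, ∀ i ∈ S, ∀ j ∈ S, (f i ≤ f j ↔ g i ≤ g j)) → f = g) ↔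
    (∀ i j : Fin n, i ≠ j → ∃ S ∈ F, i ∈ S ∧ j ∈ S) := by
  refine ⟨fun hsort i j hij => ?_, fun hcov f g hcmp => ?_⟩
  · by_contra! hcov
    obtain ⟨b, hab, -⟩ := exists_covBy_le_of_lt (min_lt_max.2 hij)
    generalize min i j = a at hab
    obtain ⟨f, hfi, hfj⟩ := (Equiv.refl _).exists_apply_eq_and_apply_eq hij hab.lt.ne
    have hfg : f = f.trans (Equiv.swap a b) := hsort _ _ fun S hS p hp q hq => by
      rw [Equiv.trans_apply, Equiv.trans_apply,
        Equiv.swap_apply_le_swap_apply_iff_of_covBy hab] <;>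
      · rw [← hfi, ← hfj, f.apply_eq_iff_eq, f.apply_eq_iff_eq]
        rintro ⟨rfl, rfl⟩
        first | exact hcov _ hS hp hq | exact hcov _ hS hq hp
    simpa [hfi, hab.lt.ne] using DFunLike.congr_fun hfg i
  · refine Equiv.eq_of_le_iff_le fun i j => ?_
    rcases eq_or_ne i j with rfl | hij
    · simp
    obtain ⟨S, hS, hi, hj⟩ := hcov i j hij
    exact hcmp S hS i hi j hj
end

section
/- Let n, t be natural numbers with t even, 2 ≤ t ≤ n, and (t/2) ∣ n. Then there exists a finite family F of subsets of Fin n, each of cardinality at most t, such that every pair of distinct elements of Fin n is contained in some member of F, F.card = Nat.choose (2*n/t) 2, and F.card * Nat.choose t 2 < 2 * Nat.choose n 2. -/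
/-!
Write `t = 2k` and `n = mk`, and let `x ↦ x / k` cut `Fin n` into `m` blocks of `k` consecutive
elements. The unions of two blocks have `2k = t` elements, any two elements lie in a common one,
and there are `m choose 2` of them. The count inequality
`(m choose 2) (2k choose 2) < 2 (mk choose 2)` reduces to `(m - 1)(2k - 1) < 2(mk - 1)`, that is,
to `m + 2k > 3`.
-/

open Finset Function

section PairPreimages

variable {α β : Type*} [Fintype α] [DecidableEq α] [Fintype β] [DecidableEq β]

/-- `g` assigns each element its group; the members are the unions of two distinct groups. -/
def pairPreimages (g : α → β) : Finset (Finset α) :=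
  (univ.powersetCard 2).image fun p => ({a | g a ∈ p} : Finset α)

lemma card_le_of_mem_pairPreimages {g : α → β} {k : ℕ} (hg : ∀ b, #{a | g a = b} ≤ k)
    {S : Finset α} (hS : S ∈ pairPreimages g) : #S ≤ 2 * k := by
  obtain ⟨p, hp, rfl⟩ := mem_image.1 hS
  have hp2 : #p = 2 := (mem_powersetCard.1 hp).2
  calc #({a | g a ∈ p} : Finset α)
      ≤ k * #(({a | g a ∈ p} : Finset α).image g) :=
        card_le_mul_card_image _ k fun b _ =>
          (card_le_card (filter_subset_filter _ (subset_univ _))).trans (hg b)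
    _ ≤ k * #p :=
        Nat.mul_le_mul_left k (card_le_card (image_subset_iff.2 fun a ha => (mem_filter.1 ha).2))
    _ = 2 * k := by rw [hp2, mul_comm]

lemma exists_mem_pairPreimages (g : α → β) (hβ : 2 ≤ Fintype.card β) (a a' : α) :
    ∃ S ∈ pairPreimages g, a ∈ S ∧ a' ∈ S := by
  obtain ⟨p, hsub, -, hp⟩ := exists_subsuperset_card_eq (subset_univ {g a, g a'}) card_le_two hβ
  exact ⟨_, mem_image_of_mem _ (mem_powersetCard.2 ⟨subset_univ p, hp⟩),
    by simpa using hsub (mem_insert_self _ _),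
    by simpa using hsub (mem_insert_of_mem (mem_singleton_self _))⟩

lemma card_pairPreimages {g : α → β} (hg : Surjective g) :
    #(pairPreimages g) = (Fintype.card β).choose 2 := by
  rw [pairPreimages, card_image_of_injective, card_powersetCard, card_univ]
  intro p q hpq
  ext b
  obtain ⟨a, rfl⟩ := hg b
  simpa using congrArg (a ∈ ·) hpq

end PairPreimages

namespace Fin

lemma card_filter_divNat_eq_le {m n : ℕ} (b : Fin m) : #{x : Fin (m * n) | x.divNat = b} ≤ n :=
  calc #{x : Fin (m * n) | x.divNat = b}
      ≤ #(univ.image (mkDivMod b)) := card_le_card fun x hx => by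
        rw [mem_filter] at hx
        exact mem_image.2 ⟨x.modNat, mem_univ _, by rw [← hx.2, divNat_mkDivMod_modNat]⟩
    _ ≤ n := card_image_le.trans_eq (card_fin n)

lemma divNat_surjective {m n : ℕ} (hn : 0 < n) : Surjective (divNat : Fin (m * n) → Fin m) :=
  fun b => ⟨mkDivMod b ⟨0, hn⟩, divNat_mkDivMod _ _⟩

end Fin

lemma choose_two_mul_choose_two_lt {m k : ℕ} (hm : 2 ≤ m) (hk : 1 ≤ k) :
    m.choose 2 * (2 * k).choose 2 < 2 * (m * k).choose 2 := by
  suffices ((m.choose 2 * (2 * k).choose 2 : ℕ) : ℚ) < ((2 * (m * k).choose 2 : ℕ) : ℚ) by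
    exact_mod_cast this
  obtain ⟨m, rfl⟩ := Nat.exists_eq_add_of_le hm
  obtain ⟨k, rfl⟩ := Nat.exists_eq_add_of_le hk
  push_cast [Nat.cast_choose_two]
  have : (0 : ℚ) < (2 + m) * (1 + k) * (m + 2 * k + 1) := by positivity
  linarith

/-- When `t` is even, `2 ≤ t ≤ n` and `(t/2) ∣ n`, splitting `Fin n` into
`2n/t` groups of size `t/2` and comparing unions of pairs of groups gives a
covering family of `(2n/t choose 2)` sets, each of size at most `t`, which is
within a factor `2` of the information-theoretic minimum. -/
theorem covering_within_factor_two
    (n t : ℕ) (hteven : Even t) (ht2 : 2 ≤ t) (htn : t ≤ n) (hdvd : (t / 2) ∣ n) :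
    ∃ F : Finset (Finset (Fin n)),
      (∀ S ∈ F, S.card ≤ t) ∧
      (∀ a b : Fin n, a ≠ b → ∃ S ∈ F, a ∈ S ∧ b ∈ S) ∧
      F.card = Nat.choose (2 * n / t) 2 ∧
      F.card * Nat.choose t 2 < 2 * Nat.choose n 2 := by
  obtain ⟨k, rfl⟩ : ∃ k, t = 2 * k := hteven.two_dvd
  have hk : 0 < k := by omega
  rw [Nat.mul_div_cancel_left k two_pos, dvd_iff_exists_eq_mul_left] at hdvd
  obtain ⟨m, rfl⟩ := hdvd
  have hm : 2 ≤ m := Nat.le_of_mul_le_mul_right htn hk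
  have hcard := card_pairPreimages (Fin.divNat_surjective (m := m) hk)
  rw [Fintype.card_fin] at hcard
  refine ⟨pairPreimages Fin.divNat, fun S hS => card_le_of_mem_pairPreimages
    Fin.card_filter_divNat_eq_le hS, fun a b _ => exists_mem_pairPreimages _ (by simpa) a b, ?_, ?_⟩
  · rw [hcard, mul_left_comm, Nat.mul_div_cancel m (by omega)]
  · rw [hcard]
    exact choose_two_mul_choose_two_lt hm hk
end

section
/- Let n, t be natural numbers with t even and 2 ≤ t ≤ n. Then there exists a finite family F of subsets of Fin n, each of cardinality at most t, such that every pair of distinct elements of Fin n is contained in some member of F and F.card * Nat.choose t 2 < 3 * Nat.choose n 2. -/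
/-!
Cut `Fin n` into `m` intervals of length `s = t / 2` (the last one possibly shorter) and take
the union of every two of them: these `choose m 2` sets have at most `t` elements and cover all
pairs. Since `(m - 1) s < n` and `2 s ≤ n`,
`choose m 2 * choose t 2 < (m s) ((m - 1) s) ≤ (n - 1 + s) (n - 1) < 3 * choose n 2`.
-/

open Finset

section PairUnions

variable {α ι : Type*} [Fintype α] [DecidableEq α] [DecidableEq ι]

def pairUnions (f : α → ι) (B : Finset ι) : Finset (Finset α) :=
  (B.powersetCard 2).image fun p => ({a | f a ∈ p} : Finset α)

lemma card_pairUnions_le (f : α → ι) (B : Finset ι) :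
    #(pairUnions f B) ≤ (#B).choose 2 :=
  card_image_le.trans (card_powersetCard 2 B).le

lemma card_le_of_mem_pairUnions {f : α → ι} {B : Finset ι} {s : ℕ}
    (hfiber : ∀ i, #{a | f a = i} ≤ s) {S : Finset α} (hS : S ∈ pairUnions f B) :
    #S ≤ 2 * s := by
  obtain ⟨p, hp, rfl⟩ := mem_image.1 hS
  calc #{a | f a ∈ p} ≤ ∑ i ∈ p, #{a | f a = i} := by
        rw [show ({a | f a ∈ p} : Finset α) = p.biUnion fun i => {a | f a = i} by ext; simp]
        exact card_biUnion_le
    _ ≤ ∑ _i ∈ p, s := sum_le_sum fun i _ => hfiber i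
    _ = 2 * s := by rw [sum_const, (mem_powersetCard.1 hp).2, smul_eq_mul]

lemma exists_mem_pairUnions {f : α → ι} {B : Finset ι} (hf : ∀ a, f a ∈ B) (hB : 1 < #B)
    (a b : α) : ∃ S ∈ pairUnions f B, a ∈ S ∧ b ∈ S := by
  -- the block of `b` if it differs from that of `a`, any other block otherwise
  obtain ⟨k, hkB, hk⟩ : ∃ k ∈ B, k ≠ f a ∧ (f b = f a ∨ k = f b) := by
    by_cases hab : f b = f a
    · obtain ⟨k, hkB, hk⟩ := exists_mem_ne hB (f a)
      exact ⟨k, hkB, hk, .inl hab⟩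
    · exact ⟨f b, hf b, hab, .inr rfl⟩
  refine ⟨({x | f x ∈ {f a, k}} : Finset α), mem_image.2 ⟨{f a, k}, ?_, rfl⟩, by simp, ?_⟩
  · exact mem_powersetCard.2 ⟨insert_subset (hf a) (singleton_subset_iff.2 hkB),
      card_pair hk.1.symm⟩
  · rcases hk.2 with h | h <;> simp [h]

end PairUnions

lemma card_filter_div_eq_le {s : ℕ} (hs : 0 < s) (n i : ℕ) :
    #{a : Fin n | (a : ℕ) / s = i} ≤ s := by
  have hmaps : ∀ a ∈ ({a : Fin n | (a : ℕ) / s = i} : Finset (Fin n)),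
      (a : ℕ) ∈ Ico (i * s) (i * s + s) := by
    intro a ha
    obtain rfl := (mem_filter.1 ha).2
    exact mem_Ico.2 ⟨Nat.div_mul_le_self _ _, Nat.lt_div_mul_add hs⟩
  simpa using card_le_card_of_injOn _ hmaps Fin.val_injective.injOn

lemma choose_two_mul_choose_two_lt_s11 {m s n : ℕ} (hs : 0 < s) (hm : 0 < m) (hmn : m * s < n)
    (hsn : 2 * s ≤ n) : (m + 1).choose 2 * (2 * s).choose 2 < 3 * n.choose 2 := by
  have two_mul_choose (k : ℕ) : 2 * (k + 1).choose 2 = (k + 1) * k := by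
    have := Nat.add_one_mul_choose_eq k 1
    rw [Nat.choose_one_right] at this
    linarith
  obtain ⟨n, rfl⟩ : ∃ n', n = n' + 1 := ⟨n - 1, by omega⟩
  have hms : m * s ≤ n := by omega
  suffices (m + 1) * m * ((2 * s) * (2 * s - 1)) < 6 * ((n + 1) * n) by
    have h1 := two_mul_choose m
    have h2 := two_mul_choose (2 * s - 1)
    have h3 := two_mul_choose n
    rw [Nat.sub_add_cancel (by omega)] at h2
    nlinarith
  calc (m + 1) * m * ((2 * s) * (2 * s - 1)) < (m + 1) * m * ((2 * s) * (2 * s)) := by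
        gcongr
        omega
    _ = 4 * ((m * s + s) * (m * s)) := by ring
    _ ≤ 4 * ((n + s) * n) := by gcongr
    _ ≤ 6 * ((n + 1) * n) := by nlinarith

/-- For any `n` and even `t` with `2 ≤ t ≤ n`, one-round sorting is possible
with fewer than three times the information-theoretic minimum of
`(n choose 2) / (t choose 2)` comparators. -/
theorem covering_within_factor_three
    (n t : ℕ) (hteven : Even t) (ht2 : 2 ≤ t) (htn : t ≤ n) :
    ∃ F : Finset (Finset (Fin n)),
      (∀ S ∈ F, S.card ≤ t) ∧
      (∀ a b : Fin n, a ≠ b → ∃ S ∈ F, a ∈ S ∧ b ∈ S) ∧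
      F.card * Nat.choose t 2 < 3 * Nat.choose n 2 := by
  obtain ⟨s, rfl⟩ := hteven
  have hs : 0 < s := by omega
  set m := (n - 1) / s
  have hm : 0 < m := Nat.div_pos (by omega) hs
  have hblock (a : Fin n) : (a : ℕ) / s ∈ range (m + 1) :=
    mem_range.2 (Nat.lt_succ_of_le (Nat.div_le_div_right (by omega)))
  refine ⟨pairUnions (fun a : Fin n => (a : ℕ) / s) (range (m + 1)), fun S hS => ?_,
    fun a b _ => exists_mem_pairUnions hblock (by simpa using hm) a b, ?_⟩
  · simpa [two_mul] using card_le_of_mem_pairUnions (card_filter_div_eq_le hs n) hS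
  · calc _ ≤ (m + 1).choose 2 * (2 * s).choose 2 := by
          rw [← two_mul]
          gcongr
          simpa using card_pairUnions_le (fun a : Fin n => (a : ℕ) / s) (range (m + 1))
      _ < 3 * n.choose 2 := choose_two_mul_choose_two_lt_s11 hs hm
          ((Nat.div_mul_le_self (n - 1) s).trans_lt (by omega)) (by omega)
end

section
/- Let n, t be natural numbers with 2*n ≤ 3*t and t ≤ n. Then there exist three subsets S₁, S₂, S₃ of Fin n, each of cardinality at most t, such that every pair of distinct elements of Fin n is contained in at least one of S₁, S₂, S₃. -/
open Finset

/-! With `k = n - t` and three pairwise disjoint blocks `A, B, C` of size `k` (possible as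
`3k ≤ n`), the complements `Aᶜ, Bᶜ, Cᶜ` have size `n - k ≤ t`; two elements meet at most two
of the blocks, so both avoid the third and lie together in its complement. -/

variable {α : Type*}

theorem exists_pairwise_disjoint_three_of_three_mul_le_card [Fintype α] [DecidableEq α] {k : ℕ}
    (h : 3 * k ≤ Fintype.card α) :
    ∃ A B C : Finset α, #A = k ∧ #B = k ∧ #C = k ∧
      Disjoint A B ∧ Disjoint A C ∧ Disjoint B C := by
  obtain ⟨A, -, hA⟩ := exists_subset_card_eq (s := (univ : Finset α)) (n := k)
    (by rw [card_univ]; omega)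
  obtain ⟨B, hBA, hB⟩ := exists_subset_card_eq (s := Aᶜ) (n := k)
    (by rw [card_compl]; omega)
  obtain ⟨C, hCAB, hC⟩ := exists_subset_card_eq (s := (A ∪ B)ᶜ) (n := k)
    (by rw [card_compl]; have := card_union_le A B; omega)
  have hCA : C ⊆ Aᶜ := hCAB.trans (compl_subset_compl.mpr subset_union_left)
  have hCB : C ⊆ Bᶜ := hCAB.trans (compl_subset_compl.mpr subset_union_right)
  exact ⟨A, B, C, hA, hB, hC, disjoint_of_subset_right hBA disjoint_compl_right,
    disjoint_of_subset_right hCA disjoint_compl_right,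
    disjoint_of_subset_right hCB disjoint_compl_right⟩

theorem notMem_pair_of_pairwise_disjoint_three {A B C : Finset α}
    (hAB : Disjoint A B) (hAC : Disjoint A C) (hBC : Disjoint B C) (a b : α) :
    (a ∉ A ∧ b ∉ A) ∨ (a ∉ B ∧ b ∉ B) ∨ (a ∉ C ∧ b ∉ C) := by
  rw [disjoint_left] at hAB hAC hBC
  grind

theorem three_comparators_suffice_general
    (n t : ℕ) (h1 : 2 * n ≤ 3 * t) :
    ∃ S₁ S₂ S₃ : Finset (Fin n),
      S₁.card ≤ t ∧ S₂.card ≤ t ∧ S₃.card ≤ t ∧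
      ∀ a b : Fin n, a ≠ b →
        (a ∈ S₁ ∧ b ∈ S₁) ∨ (a ∈ S₂ ∧ b ∈ S₂) ∨ (a ∈ S₃ ∧ b ∈ S₃) := by
  obtain ⟨A, B, C, hA, hB, hC, hAB, hAC, hBC⟩ :=
    exists_pairwise_disjoint_three_of_three_mul_le_card (α := Fin n) (k := n - t)
      (by rw [Fintype.card_fin]; omega)
  have card_compl_le {S : Finset (Fin n)} (hS : #S = n - t) : #Sᶜ ≤ t := by
    rw [card_compl, Fintype.card_fin]; omega
  refine ⟨Aᶜ, Bᶜ, Cᶜ, card_compl_le hA, card_compl_le hB, card_compl_le hC, fun a b _ => ?_⟩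
  simpa only [mem_compl] using notMem_pair_of_pairwise_disjoint_three hAB hAC hBC a b

/-- For `t ≥ (2/3) n`, three `t`-comparators suffice to cover all pairs of
`Fin n` in a single round. -/
theorem three_comparators_suffice
    (n t : ℕ) (h1 : 2 * n ≤ 3 * t) (h2 : t ≤ n) :
    ∃ S₁ S₂ S₃ : Finset (Fin n),
      S₁.card ≤ t ∧ S₂.card ≤ t ∧ S₃.card ≤ t ∧
      ∀ a b : Fin n, a ≠ b →
        (a ∈ S₁ ∧ b ∈ S₁) ∨ (a ∈ S₂ ∧ b ∈ S₂) ∨ (a ∈ S₃ ∧ b ∈ S₃) :=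
  three_comparators_suffice_general n t h1
end

section
/- Let n, t be natural numbers with 2 ≤ t < n and 2*n ≤ 3*t. Then: (a) there exists a finite family F of subsets of Fin n with F.card = 3, each member of cardinality at most t, such that every pair of distinct elements of Fin n is contained in some member of F; and (b) every finite family F of subsets of Fin n whose members all have cardinality at most t and for which every pair of distinct elements of Fin n is contained in some member satisfies F.card ≥ 3. -/
/-!
Two proper subsets cannot cover all pairs: if `x ∉ S`, some member `T` covering a pair
through `x` misses a point `z ≠ x`, and the pair `{x, z}` then needs a third member.
Conversely, cut `Fin n` into three intervals of length at least `n - t` (possible exactly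
when `2n ≤ 3t`); the three unions of two of them have size at most `t`, and any two
points lie together in one of them, since together they meet at most two intervals.
-/

open Finset

variable {α : Type*}

def CoversPairs (F : Finset (Finset α)) : Prop :=
  ∀ a b : α, a ≠ b → ∃ S ∈ F, a ∈ S ∧ b ∈ S

theorem CoversPairs.two_lt_card [Nontrivial α] {F : Finset (Finset α)} (hF : CoversPairs F)
    (hproper : ∀ S ∈ F, ∃ x, x ∉ S) : 2 < #F := by
  obtain ⟨x₀, y₀, hxy₀⟩ := exists_pair_ne α
  obtain ⟨S, hS, -⟩ := hF x₀ y₀ hxy₀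
  obtain ⟨x, hxS⟩ := hproper S hS
  obtain ⟨y, hyx⟩ := exists_ne x
  obtain ⟨T, hT, hxT, -⟩ := hF x y hyx.symm
  obtain ⟨z, hzT⟩ := hproper T hT
  have hxz : x ≠ z := fun h => hzT (h ▸ hxT)
  obtain ⟨U, hU, hxU, hzU⟩ := hF x z hxz
  exact Finset.two_lt_card.2 ⟨S, hS, T, hT, U, hU, ne_of_mem_of_not_mem' hxT hxS |>.symm,
    ne_of_mem_of_not_mem' hxU hxS |>.symm, ne_of_mem_of_not_mem' hzU hzT |>.symm⟩

theorem coversPairs_of_two_lt_card {F : Finset (Finset α)} (hF : 2 < #F)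
    (hmiss : ∀ x, ∀ S ∈ F, ∀ T ∈ F, x ∉ S → x ∉ T → S = T) : CoversPairs F := by
  classical
  intro x y _
  have hmissing (z : α) : #(F.filter (z ∉ ·)) ≤ 1 := card_le_one.2 fun S hS T hT => by
    simp only [mem_filter] at hS hT
    exact hmiss z S hS.1 T hT.1 hS.2 hT.2
  have hlt : #(F.filter (x ∉ ·) ∪ F.filter (y ∉ ·)) < #F :=
    (card_union_le _ _).trans_lt (by linarith [hmissing x, hmissing y])
  obtain ⟨S, hS, hSmiss⟩ := exists_mem_notMem_of_card_lt_card hlt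
  simp only [mem_union, mem_filter, not_or, not_and, not_not] at hSmiss
  exact ⟨S, hS, hSmiss.1 hS, hSmiss.2 hS⟩

theorem Fin.exists_coversPairs_card_eq_three {n a : ℕ} (ha : 0 < a) (h3a : 3 * a ≤ n) :
    ∃ F : Finset (Finset (Fin n)), #F = 3 ∧ (∀ S ∈ F, #S ≤ n - a) ∧ CoversPairs F := by
  set A : Fin n := ⟨a, by omega⟩
  set B : Fin n := ⟨2 * a, by omega⟩
  have hAB : A < B := Fin.lt_def.2 (by simp [A, B]; omega)
  have hcard : #({Ici A, (Ico A B)ᶜ, Iio B} : Finset (Finset (Fin n))) = 3 := by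
    have hA₁ : A ∈ Ici A := mem_Ici.2 le_rfl
    have hA₂ : A ∉ (Ico A B)ᶜ := by simp [hAB]
    have hA₃ : A ∈ Iio B := mem_Iio.2 hAB
    have hB₁ : B ∈ Ici A := mem_Ici.2 hAB.le
    have hB₃ : B ∉ Iio B := by simp
    exact card_eq_three.2 ⟨_, _, _, ne_of_mem_of_not_mem' hA₁ hA₂,
      ne_of_mem_of_not_mem' hB₁ hB₃, (ne_of_mem_of_not_mem' hA₃ hA₂).symm, rfl⟩
  refine ⟨_, hcard, ?_, coversPairs_of_two_lt_card (by omega) ?_⟩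
  · simp only [mem_insert, mem_singleton, forall_eq_or_imp, forall_eq, card_compl,
      Fintype.card_fin, Fin.card_Ici, Fin.card_Ico, Fin.card_Iio, A, B]
    omega
  · intro x S hS T hT hxS hxT
    simp only [mem_insert, mem_singleton] at hS hT
    rcases hS with rfl | rfl | rfl <;> rcases hT with rfl | rfl | rfl <;>
      simp only [mem_Ici, mem_Iio, mem_compl, mem_Ico, not_le, not_lt, not_not] at hxS hxT <;>
      first | rfl | order

theorem optimal_one_round_three_comparators_general
    (n t : ℕ) (htn : t < n) (h23 : 2 * n ≤ 3 * t) :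
    (∃ F : Finset (Finset (Fin n)),
      F.card = 3 ∧
      (∀ S ∈ F, S.card ≤ t) ∧
      (∀ a b : Fin n, a ≠ b → ∃ S ∈ F, a ∈ S ∧ b ∈ S)) ∧
    (∀ F : Finset (Finset (Fin n)),
      (∀ S ∈ F, S.card ≤ t) →
      (∀ a b : Fin n, a ≠ b → ∃ S ∈ F, a ∈ S ∧ b ∈ S) →
      3 ≤ F.card) := by
  constructor
  · obtain ⟨F, hF3, hFcard, hFcov⟩ :=
      Fin.exists_coversPairs_card_eq_three (n := n) (a := n - t) (by omega) (by omega)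
    exact ⟨F, hF3, fun S hS => (hFcard S hS).trans (by omega), hFcov⟩
  · intro F hFcard hFcov
    have : Nontrivial (Fin n) := Fin.nontrivial_iff_two_le.2 (by omega)
    refine CoversPairs.two_lt_card hFcov fun S hS => ?_
    have hlt : #S < #(univ : Finset (Fin n)) := by
      rw [card_univ, Fintype.card_fin]
      exact (hFcard S hS).trans_lt htn
    obtain ⟨x, -, hx⟩ := exists_mem_notMem_of_card_lt_card hlt
    exact ⟨x, hx⟩

/-- For `(2/3) n ≤ t < n` (with `t ≥ 2`), the optimal one-round sorting of `n`
elements with `t`-comparators uses exactly three comparators: three suffice,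
and every covering family has at least three members. -/
theorem optimal_one_round_three_comparators
    (n t : ℕ) (ht2 : 2 ≤ t) (htn : t < n) (h23 : 2 * n ≤ 3 * t) :
    (∃ F : Finset (Finset (Fin n)),
      F.card = 3 ∧
      (∀ S ∈ F, S.card ≤ t) ∧
      (∀ a b : Fin n, a ≠ b → ∃ S ∈ F, a ∈ S ∧ b ∈ S)) ∧
    (∀ F : Finset (Finset (Fin n)),
      (∀ S ∈ F, S.card ≤ t) →
      (∀ a b : Fin n, a ≠ b → ∃ S ∈ F, a ∈ S ∧ b ∈ S) →
      3 ≤ F.card) :=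
  optimal_one_round_three_comparators_general n t htn h23
end

section
/- Define g : ℝ → ℝ by g x = Real.sqrt (2 * x * Real.logb 2 x). For every real number α ≥ 5 and every natural number b, the finite sum ∑_{j=0}^{b−1} g(α * 2^j) / 2^j is at most 10 * Real.sqrt (α * Real.logb 2 α). -/
/-!
Since `log₂ (α 2^j) = log₂ α + j ≤ (1 + j) log₂ α`, the `j`-th term is at most
`√(2 α log₂ α) · √((1 + j) / 2^j)`, and `1 + j ≤ (7/5)² (32/25)^j` bounds the second factor by
`(7/5) (4/5)^j`. Summing the geometric series gives `7 √(2 α log₂ α) = √98 · √(α log₂ α)`.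
-/

open Real Finset

lemma one_add_le_mul_pow (j : ℕ) : (1 + j : ℝ) ≤ 49 / 25 * (32 / 25) ^ j := by
  induction j with
  | zero => norm_num
  | succ n ih =>
    rcases lt_or_ge n 3 with hn | hn
    · interval_cases n <;> norm_num
    · -- beyond `j = 3` the ratio `(j + 2) / (j + 1) ≤ 5 / 4` stays below `32 / 25`
      have hn : (3 : ℝ) ≤ n := by exact_mod_cast hn
      rw [pow_succ]
      push_cast
      nlinarith

lemma logb_two_mul_two_pow {x : ℝ} (hx : x ≠ 0) (j : ℕ) :
    logb 2 (x * 2 ^ j) = logb 2 x + j := by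
  rw [logb_mul hx (by positivity), logb_pow, logb_self_eq_one one_lt_two, mul_one]

lemma one_le_logb_two {x : ℝ} (hx : 2 ≤ x) : 1 ≤ logb 2 x := by
  rw [← logb_self_eq_one one_lt_two]
  exact logb_le_logb_of_le one_lt_two zero_lt_two hx

lemma sqrt_two_mul_logb_two_pow_div_le {x : ℝ} (hx : 2 ≤ x) (j : ℕ) :
    √(2 * (x * 2 ^ j) * logb 2 (x * 2 ^ j)) / 2 ^ j
      ≤ 7 / 5 * (4 / 5) ^ j * √(2 * x * logb 2 x) := by
  set L := logb 2 x
  have hL : 1 ≤ L := one_le_logb_two hx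
  have hlog : L + j ≤ L * (49 / 25 * (32 / 25) ^ j) :=
    calc L + j ≤ L * (1 + j) := by nlinarith [(Nat.cast_nonneg j : (0 : ℝ) ≤ j)]
      _ ≤ L * (49 / 25 * (32 / 25) ^ j) := by gcongr; exact one_add_le_mul_pow j
  rw [div_le_iff₀ (by positivity), sqrt_le_left (by positivity),
    logb_two_mul_two_pow (by positivity) j, mul_pow, mul_pow, sq_sqrt (by positivity)]
  have h2x : 0 ≤ 2 * x * 2 ^ j := by positivity
  calc 2 * (x * 2 ^ j) * (L + j) ≤ 2 * x * 2 ^ j * (L * (49 / 25 * (32 / 25) ^ j)) := by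
        rw [← mul_assoc 2]; exact mul_le_mul_of_nonneg_left hlog h2x
    _ = (7 / 5 * (4 / 5) ^ j) ^ 2 * (2 * x * L) * (2 ^ j) ^ 2 := by
        have hpow : (32 / 25 : ℝ) ^ j * 2 ^ j = ((4 / 5) ^ j * 2 ^ j) ^ 2 := by
          rw [← mul_pow, ← mul_pow, ← pow_mul, mul_comm j 2, pow_mul]; norm_num
        linear_combination 49 / 25 * 2 * x * L * hpow

lemma sum_sqrt_two_mul_logb_two_pow_div_le {x : ℝ} (hx : 2 ≤ x) (b : ℕ) :
    ∑ j ∈ range b, √(2 * (x * 2 ^ j) * logb 2 (x * 2 ^ j)) / 2 ^ j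
      ≤ 7 * √(2 * x * logb 2 x) := by
  have hgeom : ∑ j ∈ range b, (4 / 5 : ℝ) ^ j ≤ 5 := by
    have h := geom_sum_Ico_le_of_lt_one (m := 0) (n := b) (x := (4 / 5 : ℝ)) (by norm_num)
      (by norm_num)
    rwa [← range_eq_Ico, pow_zero, show (1 : ℝ) / (1 - 4 / 5) = 5 by norm_num] at h
  calc ∑ j ∈ range b, √(2 * (x * 2 ^ j) * logb 2 (x * 2 ^ j)) / 2 ^ j
      ≤ ∑ j ∈ range b, 7 / 5 * (4 / 5) ^ j * √(2 * x * logb 2 x) :=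
        sum_le_sum fun j _ ↦ sqrt_two_mul_logb_two_pow_div_le hx j
    _ = 7 / 5 * (∑ j ∈ range b, (4 / 5 : ℝ) ^ j) * √(2 * x * logb 2 x) := by
        rw [← sum_mul, ← mul_sum]
    _ ≤ 7 / 5 * 5 * √(2 * x * logb 2 x) := by gcongr
    _ = 7 * √(2 * x * logb 2 x) := by norm_num

/-- The summation bound from the proof of Lemma 4.5: with
`g x = √(2 x log₂ x)`, for every `α ≥ 5` and every `b`,
`∑_{j<b} g(α·2^j)/2^j ≤ 10 √(α log₂ α)`. -/
theorem sum_g_bound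
    (g : ℝ → ℝ) (hg : ∀ x, g x = Real.sqrt (2 * x * Real.logb 2 x))
    (α : ℝ) (hα : 5 ≤ α) (b : ℕ) :
    ∑ j ∈ Finset.range b, g (α * 2 ^ j) / 2 ^ j
      ≤ 10 * Real.sqrt (α * Real.logb 2 α) := by
  have hα2 : 2 ≤ α := by linarith
  have hαL : 0 ≤ α * logb 2 α := mul_nonneg (by linarith) (by linarith [one_le_logb_two hα2])
  simp_rw [hg]
  calc ∑ j ∈ range b, √(2 * (α * 2 ^ j) * logb 2 (α * 2 ^ j)) / 2 ^ j
      ≤ 7 * √(2 * α * logb 2 α) := sum_sqrt_two_mul_logb_two_pow_div_le hα2 b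
    _ = √(98 * (α * logb 2 α)) := by
        rw [show (98 : ℝ) * (α * logb 2 α) = 7 ^ 2 * (2 * α * logb 2 α) by ring,
          sqrt_mul (by norm_num : (0 : ℝ) ≤ 7 ^ 2), sqrt_sq (by norm_num : (0 : ℝ) ≤ 7)]
    _ ≤ √(10 ^ 2 * (α * logb 2 α)) := by gcongr; norm_num
    _ = 10 * √(α * logb 2 α) := by
        rw [sqrt_mul (by norm_num : (0 : ℝ) ≤ 10 ^ 2), sqrt_sq (by norm_num : (0 : ℝ) ≤ 10)]
end

section
/- Define g : ℝ → ℝ by g x = Real.sqrt (2 * x * Real.logb 2 x). Let b ≥ 1 be a natural number and let ℓ : ℕ → ℝ be a sequence satisfying ℓ 0 ≥ 10000 * 2^(b−1) and, for every i < b, ℓ (i+1) ≥ ℓ i / 2 − g (ℓ i). Then ℓ b ≥ 1. -/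
/-!
With `k` levels still to go, a node is shown to hold at least
`loadBound k = 5000 · 2^k − 1000 · √(2^k (k + 16))` balls; at the top this is at most
`5000 · 2^b`, at the leaf it is `1000`.  One halving step preserves the bound: if the parent
holds `x ≥ 20000 · 2^k` balls then `g x ≤ x / 4` and the child keeps `x / 4 ≥ 5000 · 2^k`;
otherwise `log₂ x ≤ k + 15`, so `g x ≤ 270 · √(2^k (k + 16))`, and since the slack term grows by
a factor at most `1.46 < 2` per level, halving it frees `(1000 − 730) · √(2^k (k + 16))`, which
pays for `g x`.
-/

open Real

namespace BallReachesLeaf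

noncomputable def deviation (x : ℝ) : ℝ := √(2 * x * logb 2 x)

noncomputable def slack (k : ℕ) : ℝ := √(2 ^ k * (k + 16))

noncomputable def loadBound (k : ℕ) : ℝ := 5000 * 2 ^ k - 1000 * slack k

lemma slack_nonneg (k : ℕ) : 0 ≤ slack k := sqrt_nonneg _

lemma slack_sq (k : ℕ) : slack k ^ 2 = 2 ^ k * (k + 16) := sq_sqrt (by positivity)

lemma slack_succ_le_mul (k : ℕ) : slack (k + 1) ≤ 1.46 * slack k := by
  rw [slack, sqrt_le_left (by positivity [slack_nonneg k]), mul_pow, slack_sq, pow_succ]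
  have : (0 : ℝ) < 2 ^ k := by positivity
  push_cast
  nlinarith

lemma slack_succ_le_pow (k : ℕ) : slack (k + 1) ≤ 6 * 2 ^ k := by
  have hk : (k : ℝ) + 1 ≤ 2 ^ k := by exact_mod_cast k.lt_two_pow_self
  rw [slack, sqrt_le_left (by positivity), pow_succ]
  push_cast
  nlinarith

lemma logb_two_le_div (x : ℝ) (hx : 9216 ≤ x) : logb 2 x ≤ x / 32 := by
  have hsqrt : 96 ≤ √x := by
    rw [show (96 : ℝ) = √(96 ^ 2) by rw [sqrt_sq (by norm_num)]]
    exact sqrt_le_sqrt (by linarith)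
  have hlog : log x ≤ 2 * √x := by
    have := log_le_sub_one_of_pos (sqrt_pos.2 (by linarith : 0 < x))
    rw [log_sqrt (by linarith)] at this
    linarith
  have hx_sq : √x * √x = x := mul_self_sqrt (by linarith)
  rw [logb, div_le_iff₀ (by positivity)]
  nlinarith [log_two_gt_d9]

lemma deviation_le_quarter (x : ℝ) (hx : 9216 ≤ x) : deviation x ≤ x / 4 := by
  rw [deviation, sqrt_le_left (by linarith)]
  nlinarith [logb_two_le_div x hx]

lemma deviation_le_slack (k : ℕ) (x : ℝ) (hx₀ : 0 < x) (hx : x ≤ 20000 * 2 ^ k) :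
    deviation x ≤ 270 * slack k := by
  have hlog : logb 2 x ≤ k + 15 :=
    calc logb 2 x ≤ logb 2 (2 ^ (k + 15)) :=
          logb_le_logb_of_le one_lt_two hx₀ (by rw [pow_add]; linarith)
      _ = k + 15 := by rw [logb_pow, logb_self_eq_one one_lt_two]; push_cast; ring
  rw [deviation, sqrt_le_left (by positivity [slack_nonneg k]), mul_pow, slack_sq]
  have : (0 : ℝ) < 2 ^ k := by positivity
  nlinarith

lemma loadBound_le_half_sub_deviation (k : ℕ) (x : ℝ) (hx : loadBound (k + 1) ≤ x) :
    loadBound k ≤ x / 2 - deviation x := by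
  rw [loadBound, pow_succ] at hx
  have hpow : (1 : ℝ) ≤ 2 ^ k := one_le_pow₀ one_le_two
  have hx_lower : 4000 * 2 ^ k ≤ x := by linarith [slack_succ_le_pow k]
  rcases le_or_gt (20000 * 2 ^ k) x with hbig | hsmall
  · have := deviation_le_quarter x (by linarith)
    rw [loadBound]
    linarith [slack_nonneg k]
  · have := deviation_le_slack k x (by linarith) hsmall.le
    rw [loadBound]
    linarith [slack_succ_le_mul k]

lemma loadBound_le_of_halving (ℓ : ℕ → ℝ) (b : ℕ) (h0 : loadBound b ≤ ℓ 0)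
    (hstep : ∀ i < b, ℓ i / 2 - deviation (ℓ i) ≤ ℓ (i + 1)) :
    ∀ j ≤ b, loadBound (b - j) ≤ ℓ j := by
  intro j
  induction j with
  | zero => simpa using h0
  | succ j ih =>
    intro hj
    have hprev := ih (by omega)
    rw [show b - j = b - (j + 1) + 1 by omega] at hprev
    exact (loadBound_le_half_sub_deviation _ _ hprev).trans (hstep j hj)

lemma loadBound_le_two_pow_pred (b : ℕ) : loadBound b ≤ 10000 * 2 ^ (b - 1) := by
  have : (5000 : ℝ) * 2 ^ b ≤ 10000 * 2 ^ (b - 1) := by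
    rcases b with _ | b
    · norm_num
    · rw [Nat.add_sub_cancel, pow_succ]; linarith
  rw [loadBound]
  linarith [slack_nonneg b]

lemma loadBound_zero : loadBound 0 = 1000 := by
  rw [loadBound, slack, show ((2 : ℝ) ^ 0 * ((0 : ℕ) + 16)) = 4 ^ 2 by norm_num,
    sqrt_sq (by norm_num)]
  norm_num

end BallReachesLeaf

open BallReachesLeaf in
theorem ball_reaches_leaf_general
    (g : ℝ → ℝ) (hg : ∀ x, g x = Real.sqrt (2 * x * Real.logb 2 x))
    (b : ℕ) (ℓ : ℕ → ℝ)
    (h0 : ℓ 0 ≥ 10000 * 2 ^ (b - 1))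
    (hstep : ∀ i < b, ℓ (i + 1) ≥ ℓ i / 2 - g (ℓ i)) :
    ℓ b ≥ 1 := by
  obtain rfl : g = deviation := funext hg
  have := loadBound_le_of_halving ℓ b ((loadBound_le_two_pow_pred b).trans h0) hstep b le_rfl
  rw [Nat.sub_self, loadBound_zero] at this
  linarith

/-- Lemma 4.5 of the paper (with an explicit safe constant): if `ℓ 0` is large
enough and at each of the `b` steps at most `ℓ i / 2 − g (ℓ i)` balls are lost,
where `g x = √(2 x log₂ x)`, then at least one ball reaches the leaf. -/
theorem ball_reaches_leaf
    (g : ℝ → ℝ) (hg : ∀ x, g x = Real.sqrt (2 * x * Real.logb 2 x))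
    (b : ℕ) (hb : 1 ≤ b) (ℓ : ℕ → ℝ)
    (h0 : ℓ 0 ≥ 10000 * 2 ^ (b - 1))
    (hstep : ∀ i < b, ℓ (i + 1) ≥ ℓ i / 2 - g (ℓ i)) :
    ℓ b ≥ 1 :=
  ball_reaches_leaf_general g hg b ℓ h0 hstep
end

section
/- Let ℓ ≥ 1 be a natural number and let X be the sum of ℓ independent Bernoulli(1/2) random variables (equivalently, X is binomially distributed with parameters ℓ and 1/2). Then the probability that X ≤ ℓ/2 − Real.sqrt (2 * ℓ * Real.logb 2 ℓ) is at most 1/ℓ^2. -/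
/-!
Chernoff's method: the moment generating function of `Bin(n, 1/2)` is `((1 + eᵗ)/2)ⁿ`, and
`(1 + eᵗ)/2 = e^{t/2} cosh (t/2) ≤ e^{t/2 + t²/8}` (Hoeffding's lemma for a fair coin). Taking
`t = -4s/n` gives `P[X ≤ n/2 - s] ≤ exp (-2s²/n)`, which for `s² = 2ℓ log₂ ℓ` is
`ℓ^(-4/ln 2) ≤ ℓ⁻²`.
-/

open Real MeasureTheory ProbabilityTheory

lemma PMF.binomial_half_apply_toReal (n : ℕ) (k : Fin (n + 1)) :
    (PMF.binomial (1 / 2) (by norm_num) n k).toReal = n.choose k / 2 ^ n := by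
  have half : ((1 / 2 : NNReal) : ENNReal) = 2⁻¹ := by simp
  rw [PMF.binomial_apply, Fin.val_last, half, ENNReal.one_sub_inv_two, ← pow_add,
    Nat.add_sub_cancel' (Nat.le_of_lt_succ k.isLt)]
  simp [div_eq_mul_inv, mul_comm]

lemma mgf_binomial_half (n : ℕ) (t : ℝ) :
    mgf (fun k : Fin (n + 1) ↦ (k : ℝ)) (PMF.binomial (1 / 2) (by norm_num) n).toMeasure t
      = ((1 + exp t) / 2) ^ n := by
  rw [mgf, PMF.integral_eq_sum, div_pow, add_comm 1, add_pow, Finset.sum_div,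
    ← Fin.sum_univ_eq_sum_range]
  refine Finset.sum_congr rfl fun k _ ↦ ?_
  rw [PMF.binomial_half_apply_toReal, smul_eq_mul, one_pow, mul_one, ← exp_nat_mul]
  ring

lemma one_add_exp_div_two_le (t : ℝ) : (1 + exp t) / 2 ≤ exp (t / 2 + t ^ 2 / 8) :=
  calc (1 + exp t) / 2 = exp (t / 2) * cosh (t / 2) := by
        rw [cosh_eq, mul_div_assoc', mul_add, ← exp_add, ← exp_add, add_neg_cancel, exp_zero,
          add_halves, add_comm]
    _ ≤ exp (t / 2) * exp ((t / 2) ^ 2 / 2) := by gcongr; exact cosh_le_exp_half_sq _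
    _ = exp (t / 2 + t ^ 2 / 8) := by rw [← exp_add]; ring_nf

lemma PMF.binomial_half_lower_tail_le (n : ℕ) {s : ℝ} (hs : 0 ≤ s) :
    (PMF.binomial (1 / 2) (by norm_num) n).toMeasure.real {k | (k : ℝ) ≤ n / 2 - s}
      ≤ exp (-2 * s ^ 2 / n) := by
  set t := -4 * s / n with ht_def
  have ht : t ≤ 0 := div_nonpos_of_nonpos_of_nonneg (by linarith) n.cast_nonneg
  calc _ ≤ exp (-t * (n / 2 - s)) * ((1 + exp t) / 2) ^ n := by
        rw [← mgf_binomial_half]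
        exact measure_le_le_exp_mul_mgf _ ht .of_finite
    _ ≤ exp (-t * (n / 2 - s)) * exp (t / 2 + t ^ 2 / 8) ^ n := by
        gcongr; exact one_add_exp_div_two_le t
    _ = exp (-2 * s ^ 2 / n) := by
        rw [← exp_nat_mul, ← exp_add, ht_def]
        rcases eq_or_ne (n : ℝ) 0 with hn | hn
        · simp [hn]
        · congr 1; field_simp; ring

lemma log_le_logb_two {x : ℝ} (hx : 1 ≤ x) : log x ≤ logb 2 x :=
  le_div_self (log_nonneg hx) (log_pos one_lt_two) (by linarith [log_two_lt_d9])

/-- Lemma 4.8 of the paper: if `X` is binomial with parameters `ℓ ≥ 1` and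
`1/2`, then `Pr[X ≤ ℓ/2 − √(2 ℓ log₂ ℓ)] ≤ 1/ℓ²`. -/
theorem binomial_lower_tail_bound
    (ℓ : ℕ) (hℓ : 1 ≤ ℓ) :
    (PMF.binomial (1 / 2) (by norm_num) ℓ).toMeasure
        {k : Fin (ℓ + 1) |
          (k : ℝ) ≤ (ℓ : ℝ) / 2 - Real.sqrt (2 * ℓ * Real.logb 2 ℓ)}
      ≤ 1 / (ℓ : ENNReal) ^ 2 := by
  have hℓ₁ : (1 : ℝ) ≤ ℓ := by exact_mod_cast hℓ
  have hexp : exp (-2 * sqrt (2 * ℓ * logb 2 ℓ) ^ 2 / ℓ) ≤ ((ℓ : ℝ) ^ 2)⁻¹ :=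
    calc exp (-2 * sqrt (2 * ℓ * logb 2 ℓ) ^ 2 / ℓ) = exp (-4 * logb 2 ℓ) := by
          rw [sq_sqrt (by positivity [logb_nonneg one_lt_two hℓ₁])]; field_simp; ring_nf
      _ ≤ exp (-log ((ℓ : ℝ) ^ 2)) := by
          rw [log_pow]; push_cast
          exact exp_le_exp.2 (by linarith [log_le_logb_two hℓ₁, log_nonneg hℓ₁])
      _ = ((ℓ : ℝ) ^ 2)⁻¹ := by rw [exp_neg, exp_log (by positivity)]
  rw [← ofReal_measureReal]
  refine (ENNReal.ofReal_le_ofReal ((PMF.binomial_half_lower_tail_le ℓ (sqrt_nonneg _)).trans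
    hexp)).trans_eq ?_
  rw [ENNReal.ofReal_inv_of_pos (by positivity), ENNReal.ofReal_pow (by positivity),
    ENNReal.ofReal_natCast, one_div]
end
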